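/- arXiv:2106.07119 — 3 statements merged into one kernel-verified Lean document; each statement's English description precedes it below -/
import Mathlib

section
/- For any coupling range r ≥ 1 and any integers q1, q2, the (q1,q2)-twisted state is an equilibrium of the 2D lattice Kuramoto model with r-nearest neighbor coupling; that is, for every (i,j) ∈ (ZMod L)², the sum over all (k,ℓ) of A((i,j),(k,ℓ))·sin(θ_{k,ℓ} − θ_{i,j}) equals 0, where θ is the (q1,q2)-twisted state. -/
noncomputable section
open Real Finset Matrix

/-- Toroidal squared distance on the 2D lattice `(ZMod L)²`:
`min(|i−k|, L−|i−k|)² + min(|j−ℓ|, L−|j−ℓ|)²` with representatives in `{0,…,L−1}`. -/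
def torDist2 (L : ℕ) (x y : ZMod L × ZMod L) : ℕ :=
  (min ((x.1.val : ℤ) - (y.1.val : ℤ)).natAbs
      (L - ((x.1.val : ℤ) - (y.1.val : ℤ)).natAbs)) ^ 2
  + (min ((x.2.val : ℤ) - (y.2.val : ℤ)).natAbs
      (L - ((x.2.val : ℤ) - (y.2.val : ℤ)).natAbs)) ^ 2

/-- Adjacency of the `r`-nearest neighbor coupling:
`A(x,y) = 1` iff `0 < d(x,y) ≤ r²`, else `0`. -/
def adjR2 (L : ℕ) (r : ℝ) (x y : ZMod L × ZMod L) : ℝ :=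
  if 0 < torDist2 L x y ∧ (torDist2 L x y : ℝ) ≤ r ^ 2 then 1 else 0

/-- The `(q1,q2)`-twisted state `θ_{i,j} = 2π q1 i / L + 2π q2 j / L + C`. -/
def twisted2 (L : ℕ) (q1 q2 : ℤ) (C : ℝ) (x : ZMod L × ZMod L) : ℝ :=
  2 * π * q1 * x.1.val / L + 2 * π * q2 * x.2.val / L + C

/-!
The reflection `y ↦ 2x - y` through `x` preserves the toroidal distance to `x`. Modulo `2π` the
twisted state is a character of `(ZMod L)²` plus `C` (`2π q a / L` is well defined mod `2π`), so
the reflection negates the phase difference `θ_y - θ_x`. Hence the terms of the sum cancel in pairs.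
-/

theorem Fintype.sum_eq_zero_of_comp_perm_eq_neg {α M : Type*} [Fintype α] [AddCommGroup M]
    [LinearOrder M] [IsOrderedAddMonoid M] (e : Equiv.Perm α) (f : α → M)
    (h : ∀ a, f (e a) = -f a) : ∑ a, f a = 0 :=
  eq_zero_of_neg_eq <| by rw [← sum_neg_distrib, ← Equiv.sum_comp e f]; simp only [h]

namespace ZMod

theorem min_natAbs_val_sub_of_le {L : ℕ} [NeZero L] {a b : ZMod L} (h : b.val ≤ a.val) :
    min ((a.val : ℤ) - b.val).natAbs (L - ((a.val : ℤ) - b.val).natAbs)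
      = (a - b).valMinAbs.natAbs := by
  rw [valMinAbs_natAbs_eq_min, val_sub h]
  omega

theorem min_natAbs_val_sub {L : ℕ} [NeZero L] (a b : ZMod L) :
    min ((a.val : ℤ) - b.val).natAbs (L - ((a.val : ℤ) - b.val).natAbs)
      = (a - b).valMinAbs.natAbs := by
  rcases le_total b.val a.val with h | h
  · exact min_natAbs_val_sub_of_le h
  · rw [← Int.natAbs_neg, neg_sub, min_natAbs_val_sub_of_le h, ← natAbs_valMinAbs_neg, neg_sub]

def twistAngle (L : ℕ) [NeZero L] (q : ℤ) : ZMod L →+ Real.Angle :=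
  AddMonoidHom.mk' (fun a => ((2 * π * q * a.val / L : ℝ) : Real.Angle)) fun a b => by
    have hL : (L : ℝ) ≠ 0 := Nat.cast_ne_zero.mpr (NeZero.ne L)
    set k := (a.val + b.val) / L
    have hdiv : ((a.val + b.val : ℕ) : ℝ) = L * k + (a + b).val := by
      rw [val_add]; exact_mod_cast (Nat.div_add_mod _ _).symm
    rw [← Real.Angle.coe_add, Real.Angle.angle_eq_iff_two_pi_dvd_sub]
    refine ⟨-(q * k), ?_⟩
    push_cast at hdiv ⊢
    field_simp
    linear_combination (-q : ℝ) * hdiv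

end ZMod

theorem torDist2_eq (L : ℕ) [NeZero L] (x y : ZMod L × ZMod L) :
    torDist2 L x y = (x - y).1.valMinAbs.natAbs ^ 2 + (x - y).2.valMinAbs.natAbs ^ 2 := by
  rw [torDist2, ZMod.min_natAbs_val_sub, ZMod.min_natAbs_val_sub, Prod.fst_sub, Prod.snd_sub]

theorem torDist2_reflect (L : ℕ) [NeZero L] (x y : ZMod L × ZMod L) :
    torDist2 L x (x + x - y) = torDist2 L x y := by
  rw [torDist2_eq, torDist2_eq, show x - (x + x - y) = -(x - y) by abel, Prod.fst_neg,
    Prod.snd_neg, ZMod.natAbs_valMinAbs_neg, ZMod.natAbs_valMinAbs_neg]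

theorem adjR2_reflect (L : ℕ) [NeZero L] (r : ℝ) (x y : ZMod L × ZMod L) :
    adjR2 L r x (x + x - y) = adjR2 L r x y := by
  rw [adjR2, adjR2, torDist2_reflect]

def twistCharacter (L : ℕ) [NeZero L] (q1 q2 : ℤ) : ZMod L × ZMod L →+ Real.Angle :=
  (ZMod.twistAngle L q1).coprod (ZMod.twistAngle L q2)

theorem coe_twisted2 (L : ℕ) [NeZero L] (q1 q2 : ℤ) (C : ℝ) (x : ZMod L × ZMod L) :
    (twisted2 L q1 q2 C x : Real.Angle) = twistCharacter L q1 q2 x + C := by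
  simp only [twisted2, twistCharacter, AddMonoidHom.coprod_apply, ZMod.twistAngle,
    AddMonoidHom.mk'_apply, Real.Angle.coe_add]

theorem sin_twisted2_sub (L : ℕ) [NeZero L] (q1 q2 : ℤ) (C : ℝ) (x y : ZMod L × ZMod L) :
    Real.sin (twisted2 L q1 q2 C y - twisted2 L q1 q2 C x)
      = (twistCharacter L q1 q2 (y - x)).sin := by
  rw [← Real.Angle.sin_coe, Real.Angle.coe_sub, coe_twisted2, coe_twisted2, map_sub]
  abel_nf

theorem twisted_state_is_equilibrium_2D_general (L : ℕ) [NeZero L] (r : ℝ)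
    (q1 q2 : ℤ) (C : ℝ) (x : ZMod L × ZMod L) :
    ∑ y : ZMod L × ZMod L,
      adjR2 L r x y * Real.sin (twisted2 L q1 q2 C y - twisted2 L q1 q2 C x) = 0 := by
  refine Fintype.sum_eq_zero_of_comp_perm_eq_neg (Equiv.subLeft (x + x)) _ fun y => ?_
  rw [Equiv.subLeft_apply, adjR2_reflect, sin_twisted2_sub, sin_twisted2_sub,
    show x + x - y - x = -(y - x) by abel, map_neg, Real.Angle.sin_neg, mul_neg]

/-- For any coupling range `r ≥ 1` and any integers `q1, q2`, the `(q1,q2)`-twisted state is an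
equilibrium of the 2D lattice Kuramoto model with `r`-nearest neighbor coupling. -/
theorem twisted_state_is_equilibrium_2D (L : ℕ) [NeZero L] (r : ℝ) (hr : 1 ≤ r)
    (q1 q2 : ℤ) (C : ℝ) (x : ZMod L × ZMod L) :
    ∑ y : ZMod L × ZMod L,
      adjR2 L r x y * Real.sin (twisted2 L q1 q2 C y - twisted2 L q1 q2 C x) = 0 :=
  twisted_state_is_equilibrium_2D_general L r q1 q2 C x
end
end

section
/- Consider the 2D lattice Kuramoto model with nearest neighbor coupling (r = 1, i.e., adjacency exactly when the toroidal squared distance equals 1) and the (q1,q2)-twisted state. If 4·max{|q1|, |q2|} < L, then the Jacobian matrix J at the twisted state is negative semidefinite: xᵀ J x ≤ 0 for all x ∈ ℝⁿ (n = L²). -/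
noncomputable section
open Real Finset Matrix

/-- Adjacency with (integer) squared coupling range `r2`:
`A(x,y) = 1` iff `0 < d(x,y) ≤ r2`, else `0`. -/
def adjN2 (L r2 : ℕ) (x y : ZMod L × ZMod L) : ℝ :=
  if 0 < torDist2 L x y ∧ torDist2 L x y ≤ r2 then 1 else 0

/-- The Jacobian of the 2D lattice Kuramoto model (squared range `r2`) at a configuration `u`. -/
def jac2 (L : ℕ) [NeZero L] (r2 : ℕ) (u : ZMod L × ZMod L → ℝ) :
    Matrix (ZMod L × ZMod L) (ZMod L × ZMod L) ℝ :=
  fun x y =>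
    if x = y then -∑ z, adjN2 L r2 x z * Real.cos (u z - u x)
    else adjN2 L r2 x y * Real.cos (u y - u x)

/-- Edge weight: adjacency times cosine of the phase difference of the twisted state. -/
def wgt (L : ℕ) (q1 q2 : ℤ) (C : ℝ) (a b : ZMod L × ZMod L) : ℝ :=
  adjN2 L 1 a b * Real.cos (twisted2 L q1 q2 C b - twisted2 L q1 q2 C a)

lemma cos_key (L : ℕ) (hL : 0 < L) (q d : ℤ) (hq : 4 * |q| < (L : ℤ))
    (hd : d.natAbs = 1 ∨ d.natAbs = L - 1) :
    0 ≤ Real.cos (2 * π * (q : ℝ) * (d : ℝ) / (L : ℝ)) := by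
  have hL' : (0:ℝ) < L := by exact_mod_cast hL
  have hq' : (4:ℝ) * |(q:ℝ)| ≤ (L:ℝ) := by
    rw [← Int.cast_abs]
    exact_mod_cast hq.le
  have base : 0 ≤ Real.cos (2 * π * (q : ℝ) / (L : ℝ)) := by
    apply Real.cos_nonneg_of_mem_Icc
    have habs : |2 * π * (q:ℝ) / L| ≤ π / 2 := by
      rw [abs_div, abs_of_pos hL', abs_mul, abs_mul,
        abs_of_pos Real.pi_pos, abs_of_nonneg (by norm_num : (0:ℝ) ≤ 2)]
      rw [div_le_iff₀ hL']
      nlinarith [Real.pi_pos]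
    rcases abs_le.mp habs with ⟨h1, h2⟩
    exact ⟨h1, h2⟩
  have hcastnat : ∀ m : ℕ, m = 1 ∨ m = L - 1 →
      0 ≤ Real.cos (2 * π * (q : ℝ) * (m : ℝ) / (L : ℝ)) := by
    intro m hm
    rcases hm with hm | hm
    · subst hm; simpa using base
    · subst hm
      have h1L : 1 ≤ L := hL
      have hc : ((L - 1 : ℕ) : ℝ) = (L : ℝ) - 1 := by
        push_cast [h1L]; ring
      have hang : 2 * π * (q : ℝ) * ((L - 1 : ℕ) : ℝ) / (L : ℝ)
          = (q : ℝ) * (2 * π) - 2 * π * (q : ℝ) / (L : ℝ) := by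
        rw [hc]; field_simp
      rw [hang, Real.cos_int_mul_two_pi_sub]
      exact base
  rcases Int.natAbs_eq d with he | he
  · rw [he, Int.cast_natCast]; exact hcastnat d.natAbs hd
  · rw [he]
    have : 2 * π * (q : ℝ) * ((-(d.natAbs : ℤ) : ℤ) : ℝ) / (L : ℝ)
        = -(2 * π * (q : ℝ) * ((d.natAbs : ℕ) : ℝ) / (L : ℝ)) := by
      rw [Int.cast_neg, Int.cast_natCast]; ring
    rw [this, Real.cos_neg]
    exact hcastnat d.natAbs hd

lemma torDist2_symm (L : ℕ) (a b : ZMod L × ZMod L) : torDist2 L a b = torDist2 L b a := by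
  unfold torDist2
  have h1 : ((a.1.val : ℤ) - b.1.val).natAbs = ((b.1.val : ℤ) - a.1.val).natAbs := by omega
  have h2 : ((a.2.val : ℤ) - b.2.val).natAbs = ((b.2.val : ℤ) - a.2.val).natAbs := by omega
  rw [h1, h2]

lemma wgt_symm (L : ℕ) (q1 q2 : ℤ) (C : ℝ) (a b : ZMod L × ZMod L) :
    wgt L q1 q2 C a b = wgt L q1 q2 C b a := by
  unfold wgt adjN2
  rw [torDist2_symm, ← neg_sub (twisted2 L q1 q2 C a), Real.cos_neg]

lemma wgt_diag (L : ℕ) (q1 q2 : ℤ) (C : ℝ) (a : ZMod L × ZMod L) :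
    wgt L q1 q2 C a a = 0 := by
  unfold wgt adjN2 torDist2
  simp

lemma wgt_nonneg (L : ℕ) [NeZero L] (q1 q2 : ℤ) (C : ℝ)
    (h : 4 * max |q1| |q2| < (L : ℤ)) (a b : ZMod L × ZMod L) :
    0 ≤ wgt L q1 q2 C a b := by
  have hL : 0 < L := Nat.pos_of_ne_zero (NeZero.ne L)
  have hq1 : 4 * |q1| < (L : ℤ) := lt_of_le_of_lt (by
    have := le_max_left |q1| |q2|; linarith) h
  have hq2 : 4 * |q2| < (L : ℤ) := lt_of_le_of_lt (by
    have := le_max_right |q1| |q2|; linarith) h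
  unfold wgt adjN2
  by_cases hcond : 0 < torDist2 L a b ∧ torDist2 L a b ≤ 1
  · rw [if_pos hcond, one_mul]
    have hd1 : torDist2 L a b = 1 := by omega
    unfold torDist2 at hd1
    set m1 := ((a.1.val : ℤ) - b.1.val).natAbs with hm1
    set m2 := ((a.2.val : ℤ) - b.2.val).natAbs with hm2
    have hb1 : a.1.val < L := ZMod.val_lt _
    have hb2 : b.1.val < L := ZMod.val_lt _
    have hb3 : a.2.val < L := ZMod.val_lt _
    have hb4 : b.2.val < L := ZMod.val_lt _
    have hm1L : m1 < L := by omega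
    have hm2L : m2 < L := by omega
    set n1 := min m1 (L - m1) with hn1
    set n2 := min m2 (L - m2) with hn2
    have hsq : n1 ^ 2 + n2 ^ 2 = 1 := hd1
    have hcases : (n1 = 1 ∧ n2 = 0) ∨ (n1 = 0 ∧ n2 = 1) := by
      have h1 : n1 ≤ 1 := by
        by_contra hc
        push_neg at hc
        have : 2 ^ 2 ≤ n1 ^ 2 := Nat.pow_le_pow_left hc 2
        omega
      have h2 : n2 ≤ 1 := by
        by_contra hc
        push_neg at hc
        have : 2 ^ 2 ≤ n2 ^ 2 := Nat.pow_le_pow_left hc 2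
        omega
      interval_cases n1 <;> interval_cases n2 <;> omega
    rcases hcases with ⟨hA, hB⟩ | ⟨hA, hB⟩
    · -- horizontal edge: second coordinates agree
      have hv2 : a.2.val = b.2.val := by omega
      have hm1' : m1 = 1 ∨ m1 = L - 1 := by omega
      set d : ℤ := (b.1.val : ℤ) - a.1.val with hd
      have hdabs : d.natAbs = 1 ∨ d.natAbs = L - 1 := by omega
      have key : twisted2 L q1 q2 C b - twisted2 L q1 q2 C a
          = 2 * π * (q1 : ℝ) * (d : ℝ) / (L : ℝ) := by
        unfold twisted2
        rw [hv2, hd]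
        push_cast
        ring
      rw [key]
      exact cos_key L hL q1 d hq1 hdabs
    · -- vertical edge: first coordinates agree
      have hv1 : a.1.val = b.1.val := by omega
      have hm2' : m2 = 1 ∨ m2 = L - 1 := by omega
      set d : ℤ := (b.2.val : ℤ) - a.2.val with hd
      have hdabs : d.natAbs = 1 ∨ d.natAbs = L - 1 := by omega
      have key : twisted2 L q1 q2 C b - twisted2 L q1 q2 C a
          = 2 * π * (q2 : ℝ) * (d : ℝ) / (L : ℝ) := by
        unfold twisted2
        rw [hv1, hd]
        push_cast
        ring
      rw [key]
      exact cos_key L hL q2 d hq2 hdabs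
  · rw [if_neg hcond, zero_mul]

/-- Nearest neighbor coupling (`r = 1`): if `4 max{|q1|,|q2|} < L` then the Jacobian at the
`(q1,q2)`-twisted state is negative semidefinite. -/
theorem nearest_neighbor_negative_semidefinite (L : ℕ) [NeZero L] (q1 q2 : ℤ) (C : ℝ)
    (h : 4 * max |q1| |q2| < (L : ℤ)) (x : ZMod L × ZMod L → ℝ) :
    x ⬝ᵥ (jac2 L 1 (twisted2 L q1 q2 C)).mulVec x ≤ 0 := by
  classical
  set W : (ZMod L × ZMod L) → (ZMod L × ZMod L) → ℝ := wgt L q1 q2 C with hW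
  have hnn : ∀ a b, 0 ≤ W a b := fun a b => wgt_nonneg L q1 q2 C h a b
  have hsymm : ∀ a b, W a b = W b a := fun a b => wgt_symm L q1 q2 C a b
  have hdiag : ∀ a, W a a = 0 := fun a => wgt_diag L q1 q2 C a
  have hrow : ∀ a, (jac2 L 1 (twisted2 L q1 q2 C)).mulVec x a
      = (∑ b, W a b * x b) - (∑ b, W a b) * x a := by
    intro a
    simp only [mulVec, dotProduct, jac2]
    have hpt : ∀ b : ZMod L × ZMod L,
        (if a = b then
            -∑ z, adjN2 L 1 a z * Real.cos (twisted2 L q1 q2 C z - twisted2 L q1 q2 C a)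
          else adjN2 L 1 a b * Real.cos (twisted2 L q1 q2 C b - twisted2 L q1 q2 C a)) * x b
        = W a b * x b + (if a = b then (-(∑ z, W a z) - W a b) * x b else 0) := by
      intro b
      by_cases hab : a = b
      · subst hab
        rw [if_pos rfl, if_pos rfl]
        simp only [hW, wgt]
        ring
      · simp [hab, hW, wgt]
    rw [Finset.sum_congr rfl fun b _ => hpt b, Finset.sum_add_distrib, Finset.sum_ite_eq]
    simp only [Finset.mem_univ, if_true, hdiag a, sub_zero]
    ring
  have hQ : x ⬝ᵥ (jac2 L 1 (twisted2 L q1 q2 C)).mulVec x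
      = (∑ a, ∑ b, W a b * (x a * x b)) - (∑ a, ∑ b, W a b * (x a * x a)) := by
    simp only [dotProduct]
    rw [Finset.sum_congr rfl fun a _ => by rw [hrow a]]
    rw [← Finset.sum_sub_distrib]
    refine Finset.sum_congr rfl fun a _ => ?_
    rw [mul_sub]
    congr 1
    · rw [Finset.mul_sum]
      exact Finset.sum_congr rfl fun b _ => by ring
    · rw [Finset.sum_mul, Finset.mul_sum]
      exact Finset.sum_congr rfl fun b _ => by ring
  have hswap : (∑ a, ∑ b, W a b * (x b * x b)) = ∑ a, ∑ b, W a b * (x a * x a) := by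
    rw [Finset.sum_comm]
    exact Finset.sum_congr rfl fun a _ => Finset.sum_congr rfl fun b _ => by rw [hsymm a b]
  have hT : 0 ≤ ∑ a, ∑ b, W a b * (x a - x b) ^ 2 :=
    Finset.sum_nonneg fun a _ => Finset.sum_nonneg fun b _ =>
      mul_nonneg (hnn a b) (sq_nonneg _)
  have hTsum : (∑ a, ∑ b, W a b * (x a - x b) ^ 2)
      = (∑ a, ∑ b, W a b * (x a * x a)) - 2 * (∑ a, ∑ b, W a b * (x a * x b))
        + (∑ a, ∑ b, W a b * (x b * x b)) := by
    have hexp : ∀ a b : ZMod L × ZMod L, W a b * (x a - x b) ^ 2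
        = W a b * (x a * x a) - 2 * (W a b * (x a * x b)) + W a b * (x b * x b) := by
      intro a b; ring
    simp only [hexp, Finset.sum_add_distrib, Finset.sum_sub_distrib, Finset.mul_sum]
  rw [hQ]
  rw [hswap] at hTsum
  linarith
end
end

section
/- Consider the 2D lattice Kuramoto model with nearest neighbor coupling (r = 1) and the (q1,q2)-twisted state with 4·max{|q1|, |q2|} < L. Then the kernel of the Jacobian matrix J at the twisted state is one-dimensional, spanned by the all-ones vector; equivalently, if J y = 0 then y is a constant vector. Consequently every eigenvalue of J other than the simple eigenvalue 0 is strictly negative. -/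
noncomputable section
open Real Finset Matrix

namespace KuraAux

/-- Edge weight. -/
def W (L : ℕ) (u : ZMod L × ZMod L → ℝ) (x z : ZMod L × ZMod L) : ℝ :=
  adjN2 L 1 x z * Real.cos (u z - u x)

variable {L : ℕ} [NeZero L]

lemma torDist2_comm (x y : ZMod L × ZMod L) : torDist2 L x y = torDist2 L y x := by
  unfold torDist2
  rw [← Int.natAbs_neg ((x.1.val : ℤ) - (y.1.val : ℤ)),
    ← Int.natAbs_neg ((x.2.val : ℤ) - (y.2.val : ℤ)), neg_sub, neg_sub]

lemma torDist2_self (x : ZMod L × ZMod L) : torDist2 L x x = 0 := by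
  simp [torDist2]

lemma W_self (u : ZMod L × ZMod L → ℝ) (x : ZMod L × ZMod L) : W L u x x = 0 := by
  simp [W, adjN2, torDist2_self]

lemma W_comm (u : ZMod L × ZMod L → ℝ) (x z : ZMod L × ZMod L) : W L u x z = W L u z x := by
  unfold W adjN2
  rw [torDist2_comm x z, ← Real.cos_neg (u z - u x), neg_sub]

lemma mulVec_eq (u y : ZMod L × ZMod L → ℝ) (x : ZMod L × ZMod L) :
    (jac2 L 1 u).mulVec y x = ∑ z, W L u x z * (y z - y x) := by
  have hterm : ∀ z, jac2 L 1 u x z * y z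
      = W L u x z * y z + (if z = x then (-(∑ w, W L u x w)) * y x else 0) := by
    intro z
    by_cases hz : x = z
    · subst hz; simp [jac2, W_self, W, adjN2, torDist2_self]
    · simp [jac2, hz, W, Ne.symm hz]
  show ∑ z, jac2 L 1 u x z * y z = _
  rw [Finset.sum_congr rfl (fun z _ => hterm z), Finset.sum_add_distrib,
    Finset.sum_ite_eq' Finset.univ x (fun _ => (-(∑ w, W L u x w)) * y x)]
  simp only [Finset.mem_univ, if_true]
  simp_rw [mul_sub]
  rw [Finset.sum_sub_distrib, ← Finset.sum_mul]
  ring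

lemma quad (u y : ZMod L × ZMod L → ℝ) :
    2 * ∑ x, y x * (jac2 L 1 u).mulVec y x
      = - ∑ x, ∑ z, W L u x z * (y z - y x) ^ 2 := by
  have h1 : ∑ x, y x * (jac2 L 1 u).mulVec y x
      = ∑ x, ∑ z, y x * (W L u x z * (y z - y x)) := by
    simp_rw [mulVec_eq, Finset.mul_sum]
  have h2 : (∑ x, ∑ z, y x * (W L u x z * (y z - y x)))
      = ∑ x, ∑ z, y z * (W L u x z * (y x - y z)) := by
    rw [Finset.sum_comm]
    refine Finset.sum_congr rfl fun a _ => Finset.sum_congr rfl fun b _ => ?_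
    rw [W_comm]
  calc 2 * ∑ x, y x * (jac2 L 1 u).mulVec y x
      = (∑ x, ∑ z, y x * (W L u x z * (y z - y x)))
        + ∑ x, ∑ z, y z * (W L u x z * (y x - y z)) := by rw [h1, h2]; ring
    _ = ∑ x, ∑ z, (y x * (W L u x z * (y z - y x)) + y z * (W L u x z * (y x - y z))) := by
        rw [← Finset.sum_add_distrib]
        exact Finset.sum_congr rfl fun x _ => (Finset.sum_add_distrib).symm
    _ = ∑ x, ∑ z, -(W L u x z * (y z - y x) ^ 2) :=
        Finset.sum_congr rfl fun x _ => Finset.sum_congr rfl fun z _ => by ring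
    _ = - ∑ x, ∑ z, W L u x z * (y z - y x) ^ 2 := by
        simp [Finset.sum_neg_distrib]

lemma cos_pos_of_small (q d : ℤ) (hq : 4 * |q| < (L : ℤ))
    (hd : d.natAbs = 1 ∨ d.natAbs = L - 1) :
    0 < Real.cos (2 * π * q * d / L) := by
  have hL0 : 0 < L := NeZero.pos L
  have hLR : (0 : ℝ) < L := by exact_mod_cast hL0
  have hq' : 4 * |(q : ℝ)| < (L : ℝ) := by exact_mod_cast hq
  have key : 0 < Real.cos (2 * π * q / L) := by
    apply Real.cos_pos_of_mem_Ioo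
    constructor
    · rw [neg_lt, ← neg_div, div_lt_iff₀ hLR]
      nlinarith [Real.pi_pos, neg_abs_le (q : ℝ), hq',
        mul_pos Real.pi_pos (show (0:ℝ) < (L:ℝ) - 4 * |(q:ℝ)| by linarith)]
    · rw [div_lt_iff₀ hLR]
      nlinarith [Real.pi_pos, le_abs_self (q : ℝ), hq',
        mul_pos Real.pi_pos (show (0:ℝ) < (L:ℝ) - 4 * |(q:ℝ)| by linarith)]
  have keyneg : 0 < Real.cos (2 * π * q * (-1) / L) := by
    rw [show 2 * π * q * (-1) / L = -(2 * π * q / L) by ring, Real.cos_neg]; exact key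
  have keyL : ∀ e : ℤ, e = (L : ℤ) - 1 ∨ e = -((L : ℤ) - 1) →
      0 < Real.cos (2 * π * q * e / L) := by
    intro e he
    have h1 : Real.cos (2 * π * (q : ℝ) * ((L : ℝ) - 1) / L) = Real.cos (2 * π * q / L) := by
      have h2 : (2 : ℝ) * π * q * ((L : ℝ) - 1) / L = -(2 * π * q / L) + q * (2 * π) := by
        field_simp; ring
      rw [h2, Real.cos_add_int_mul_two_pi, Real.cos_neg]
    have he' : ((e : ℤ) : ℝ) = (L : ℝ) - 1 ∨ ((e : ℤ) : ℝ) = -((L : ℝ) - 1) := by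
      rcases he with h | h
      · left; rw [h]; push_cast; ring
      · right; rw [h]; push_cast; ring
    rcases he' with h | h
    · rw [h, h1]; exact key
    · rw [h, show (2 : ℝ) * π * (q : ℝ) * (-((L : ℝ) - 1)) / L
          = -(2 * π * (q : ℝ) * ((L : ℝ) - 1) / L) by ring, Real.cos_neg, h1]
      exact key
  rcases hd with hd | hd
  · rcases Int.natAbs_eq_iff.mp hd with h1 | h1
    · rw [h1]; simpa using key
    · rw [h1]; simpa using keyneg
  · have hLd : d = (L : ℤ) - 1 ∨ d = -((L : ℤ) - 1) := by
      rcases Int.natAbs_eq d with h1 | h1 <;> omega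
    exact keyL d hLd

lemma cos_diff_pos (q1 q2 : ℤ) (C : ℝ) (h : 4 * max |q1| |q2| < (L : ℤ))
    (x z : ZMod L × ZMod L) (hxz : torDist2 L x z = 1) :
    0 < Real.cos (twisted2 L q1 q2 C z - twisted2 L q1 q2 C x) := by
  have hL0 : 0 < L := NeZero.pos L
  set a := min ((x.1.val : ℤ) - (z.1.val : ℤ)).natAbs (L - ((x.1.val : ℤ) - (z.1.val : ℤ)).natAbs)
    with ha
  set b := min ((x.2.val : ℤ) - (z.2.val : ℤ)).natAbs (L - ((x.2.val : ℤ) - (z.2.val : ℤ)).natAbs)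
    with hb
  have hab : a ^ 2 + b ^ 2 = 1 := hxz
  have ha1 : a ≤ 1 := by nlinarith
  have hb1 : b ≤ 1 := by nlinarith
  have hx1 : x.1.val < L := ZMod.val_lt x.1
  have hz1 : z.1.val < L := ZMod.val_lt z.1
  have hx2 : x.2.val < L := ZMod.val_lt x.2
  have hz2 : z.2.val < L := ZMod.val_lt z.2
  have hcases : (a = 1 ∧ b = 0) ∨ (a = 0 ∧ b = 1) := by
    interval_cases a <;> interval_cases b <;> omega
  have hq1 : 4 * |q1| < (L : ℤ) := lt_of_le_of_lt (by
      have := le_max_left |q1| |q2|; omega) h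
  have hq2 : 4 * |q2| < (L : ℤ) := lt_of_le_of_lt (by
      have := le_max_right |q1| |q2|; omega) h
  rcases hcases with ⟨hA, hB⟩ | ⟨hA, hB⟩
  · -- horizontal step
    have heq2 : z.2.val = x.2.val := by omega
    have hd : ((z.1.val : ℤ) - (x.1.val : ℤ)).natAbs = 1
        ∨ ((z.1.val : ℤ) - (x.1.val : ℤ)).natAbs = L - 1 := by omega
    have hdiff : twisted2 L q1 q2 C z - twisted2 L q1 q2 C x
        = 2 * π * q1 * (((z.1.val : ℤ) - (x.1.val : ℤ) : ℤ) : ℝ) / L := by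
      unfold twisted2
      rw [heq2]; push_cast; ring
    rw [hdiff]; exact cos_pos_of_small _ _ hq1 hd
  · -- vertical step
    have heq1 : z.1.val = x.1.val := by omega
    have hd : ((z.2.val : ℤ) - (x.2.val : ℤ)).natAbs = 1
        ∨ ((z.2.val : ℤ) - (x.2.val : ℤ)).natAbs = L - 1 := by omega
    have hdiff : twisted2 L q1 q2 C z - twisted2 L q1 q2 C x
        = 2 * π * q2 * (((z.2.val : ℤ) - (x.2.val : ℤ) : ℤ) : ℝ) / L := by
      unfold twisted2
      rw [heq1]; push_cast; ring
    rw [hdiff]; exact cos_pos_of_small _ _ hq2 hd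

lemma W_nonneg (q1 q2 : ℤ) (C : ℝ) (h : 4 * max |q1| |q2| < (L : ℤ))
    (x z : ZMod L × ZMod L) : 0 ≤ W L (twisted2 L q1 q2 C) x z := by
  unfold W adjN2
  split
  · rename_i hc
    have hd : torDist2 L x z = 1 := by omega
    have := cos_diff_pos q1 q2 C h x z hd
    rw [one_mul]; exact this.le
  · simp

lemma W_pos (q1 q2 : ℤ) (C : ℝ) (h : 4 * max |q1| |q2| < (L : ℤ))
    (x z : ZMod L × ZMod L) (hd : torDist2 L x z = 1) :
    0 < W L (twisted2 L q1 q2 C) x z := by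
  unfold W adjN2
  rw [if_pos ⟨by omega, hd.le⟩, one_mul]
  exact cos_diff_pos q1 q2 C h x z hd

lemma torDist2_step1 (hL : 2 ≤ L) (i j : ZMod L) : torDist2 L (i, j) (i + 1, j) = 1 := by
  haveI : Fact (1 < L) := ⟨hL⟩
  have hadd : (i + 1 : ZMod L).val = (i.val + 1) % L := by
    rw [ZMod.val_add, ZMod.val_one]
  have hi : i.val < L := ZMod.val_lt i
  unfold torDist2
  simp only [hadd, sub_self, Int.natAbs_zero]
  rcases Nat.lt_or_ge (i.val + 1) L with hlt | hge
  · rw [Nat.mod_eq_of_lt hlt]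
    have h1 : min ((i.val : ℤ) - ((i.val + 1 : ℕ) : ℤ)).natAbs
        (L - ((i.val : ℤ) - ((i.val + 1 : ℕ) : ℤ)).natAbs) = 1 := by omega
    rw [h1]; norm_num [Nat.zero_min]
  · have he : i.val + 1 = L := by omega
    rw [he, Nat.mod_self]
    have h1 : min ((i.val : ℤ) - ((0 : ℕ) : ℤ)).natAbs
        (L - ((i.val : ℤ) - ((0 : ℕ) : ℤ)).natAbs) = 1 := by omega
    rw [h1]; norm_num [Nat.zero_min]

lemma torDist2_step2 (hL : 2 ≤ L) (i j : ZMod L) : torDist2 L (i, j) (i, j + 1) = 1 := by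
  haveI : Fact (1 < L) := ⟨hL⟩
  have hadd : (j + 1 : ZMod L).val = (j.val + 1) % L := by
    rw [ZMod.val_add, ZMod.val_one]
  have hj : j.val < L := ZMod.val_lt j
  unfold torDist2
  simp only [hadd, sub_self, Int.natAbs_zero]
  rcases Nat.lt_or_ge (j.val + 1) L with hlt | hge
  · rw [Nat.mod_eq_of_lt hlt]
    have h1 : min ((j.val : ℤ) - ((j.val + 1 : ℕ) : ℤ)).natAbs
        (L - ((j.val : ℤ) - ((j.val + 1 : ℕ) : ℤ)).natAbs) = 1 := by omega
    rw [h1]; norm_num [Nat.zero_min]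
  · have he : j.val + 1 = L := by omega
    rw [he, Nat.mod_self]
    have h1 : min ((j.val : ℤ) - ((0 : ℕ) : ℤ)).natAbs
        (L - ((j.val : ℤ) - ((0 : ℕ) : ℤ)).natAbs) = 1 := by omega
    rw [h1]; norm_num [Nat.zero_min]

end KuraAux

open KuraAux

/-- Nearest neighbor coupling (`r = 1`): if `4 max{|q1|,|q2|} < L` then the kernel of the Jacobian
at the `(q1,q2)`-twisted state is one-dimensional, spanned by the all-ones vector (any kernel
vector is constant), and every eigenvalue other than the simple eigenvalue `0` is strictly
negative. -/
theorem nearest_neighbor_kernel_one_dimensional (L : ℕ) [NeZero L] (q1 q2 : ℤ) (C : ℝ)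
    (h : 4 * max |q1| |q2| < (L : ℤ)) :
    (jac2 L 1 (twisted2 L q1 q2 C)).mulVec (Function.const _ 1) = 0 ∧
    (∀ y : ZMod L × ZMod L → ℝ,
      (jac2 L 1 (twisted2 L q1 q2 C)).mulVec y = 0 → ∃ c : ℝ, y = Function.const _ c) ∧
    (∀ μ : ℝ, Module.End.HasEigenvalue
      (Matrix.toLin' (jac2 L 1 (twisted2 L q1 q2 C))) μ → μ ≠ 0 → μ < 0) := by
  set u := twisted2 L q1 q2 C with hu
  refine ⟨?_, ?_, ?_⟩
  · funext x
    rw [mulVec_eq]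
    simp [Function.const]
  · intro y hy
    rcases Nat.lt_or_ge L 2 with hL | hL
    · -- L = 1 : index type is a subsingleton
      have hL1 : L = 1 := by have := NeZero.pos L; omega
      subst hL1
      exact ⟨y (0, 0), funext fun p => by rw [Subsingleton.elim p ((0 : ZMod 1), (0 : ZMod 1))]; rfl⟩
    · have hQ : ∑ x, y x * (jac2 L 1 u).mulVec y x = 0 := by
        rw [hy]; simp
      have hR : ∑ x, ∑ z, W L u x z * (y z - y x) ^ 2 = 0 := by
        have := quad u y
        rw [hQ] at this
        linarith
      have hterm : ∀ x ∈ Finset.univ, ∀ z ∈ Finset.univ,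
          W L u x z * (y z - y x) ^ 2 = 0 := by
        have h1 := (Finset.sum_eq_zero_iff_of_nonneg (fun x _ =>
          Finset.sum_nonneg fun z _ =>
            mul_nonneg (W_nonneg q1 q2 C h x z) (sq_nonneg _))).mp hR
        intro x hx z hz
        exact (Finset.sum_eq_zero_iff_of_nonneg (fun z _ =>
          mul_nonneg (W_nonneg q1 q2 C h x z) (sq_nonneg _))).mp (h1 x hx) z hz
      have hEq : ∀ x z : ZMod L × ZMod L, torDist2 L x z = 1 → y z = y x := by
        intro x z hd
        have hW := W_pos q1 q2 C h x z hd
        have h0 := hterm x (Finset.mem_univ x) z (Finset.mem_univ z)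
        have h2 : (y z - y x) ^ 2 = 0 := by
          rcases mul_eq_zero.mp h0 with h' | h'
          · exact absurd h' hW.ne'
          · exact h'
        have := pow_eq_zero_iff (n := 2) (by norm_num) |>.mp h2
        linarith [sub_eq_zero.mp this]
      have hstep1 : ∀ i j : ZMod L, y (i + 1, j) = y (i, j) :=
        fun i j => hEq (i, j) (i + 1, j) (torDist2_step1 hL i j)
      have hstep2 : ∀ i j : ZMod L, y (i, j + 1) = y (i, j) :=
        fun i j => hEq (i, j) (i, j + 1) (torDist2_step2 hL i j)
      have hrow : ∀ (n : ℕ) (j : ZMod L), y ((n : ZMod L), j) = y (0, j) := by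
        intro n j
        induction n with
        | zero => norm_num
        | succ n ih =>
          have hc : ((n + 1 : ℕ) : ZMod L) = (n : ZMod L) + 1 := by push_cast; ring
          rw [hc, hstep1, ih]
      have hcol : ∀ (n : ℕ) (i : ZMod L), y (i, (n : ZMod L)) = y (i, 0) := by
        intro n i
        induction n with
        | zero => norm_num
        | succ n ih =>
          have hc : ((n + 1 : ℕ) : ZMod L) = (n : ZMod L) + 1 := by push_cast; ring
          rw [hc, hstep2, ih]
      refine ⟨y (0, 0), funext fun p => ?_⟩
      have e1 : ((p.1.val : ℕ) : ZMod L) = p.1 := ZMod.natCast_rightInverse p.1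
      have e2 : ((p.2.val : ℕ) : ZMod L) = p.2 := ZMod.natCast_rightInverse p.2
      calc y p = y (p.1, p.2) := rfl
        _ = y (p.1, ((p.2.val : ℕ) : ZMod L)) := by rw [e2]
        _ = y (p.1, 0) := hcol p.2.val p.1
        _ = y (((p.1.val : ℕ) : ZMod L), 0) := by rw [e1]
        _ = y (0, 0) := hrow p.1.val 0
  · intro μ hμ hne
    obtain ⟨v, hv⟩ := hμ.exists_hasEigenvector
    have hv0 : v ≠ 0 := hv.2
    have happ : (jac2 L 1 u).mulVec v = μ • v := by
      have := hv.apply_eq_smul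
      rwa [Matrix.toLin'_apply] at this
    have hQ : ∑ x, v x * (jac2 L 1 u).mulVec v x = μ * ∑ x, v x ^ 2 := by
      rw [happ, Finset.mul_sum]
      exact Finset.sum_congr rfl fun x _ => by simp [Pi.smul_apply, smul_eq_mul]; ring
    have hRnn : 0 ≤ ∑ x, ∑ z, W L u x z * (v z - v x) ^ 2 :=
      Finset.sum_nonneg fun x _ => Finset.sum_nonneg fun z _ =>
        mul_nonneg (W_nonneg q1 q2 C h x z) (sq_nonneg _)
    have hQle : ∑ x, v x * (jac2 L 1 u).mulVec v x ≤ 0 := by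
      have := quad u v
      linarith
    have hsum : 0 < ∑ x, v x ^ 2 := by
      obtain ⟨x, hx⟩ := Function.ne_iff.mp hv0
      exact Finset.sum_pos' (fun x _ => sq_nonneg _)
        ⟨x, Finset.mem_univ x, lt_of_le_of_ne (sq_nonneg _) (Ne.symm (pow_ne_zero 2 hx))⟩
    have hμle : μ ≤ 0 := by nlinarith [hQ, hQle, hsum]
    exact lt_of_le_of_ne hμle hne
end
end
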